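/- Let Z₁, …, Zₙ, Y be random variables taking values in finite sets. If Z₁, …, Zₙ are mutually independent, and mutually conditionally independent given Y, then I((Z₁, …, Zₙ); Y) = Σ_{i=1}^{n} I(Zᵢ; Y). (This is the finite-additivity property underlying the paper's claim that mutual information is a correct basis for a measure on subsets of features, satisfying countable additivity across the independent subsets defined in U.) -/

import Mathlib

open MeasureTheory ProbabilityTheory Real

/-- Mutual information of two finitely-valued random variables, defined by the
finite sum `I(Z;Y) = Σ_{z,y} P(Z=z, Y=y) log( P(Z=z,Y=y) / (P(Z=z) P(Y=y)) )`,
with the convention `0 log 0 = 0` (automatic since `Real.log 0 = 0`). -/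
noncomputable def mutInfo {Ω α β : Type*} [MeasurableSpace Ω] (μ : Measure Ω)
    [Fintype α] [Fintype β] (Z : Ω → α) (Y : Ω → β) : ℝ :=
  ∑ z : α, ∑ y : β,
    (μ (Z ⁻¹' {z} ∩ Y ⁻¹' {y})).toReal *
      Real.log ((μ (Z ⁻¹' {z} ∩ Y ⁻¹' {y})).toReal /
        ((μ (Z ⁻¹' {z})).toReal * (μ (Y ⁻¹' {y})).toReal))

/-- If `Z₁, …, Zₙ` are mutually independent and mutually conditionally
independent given `Y`, then `I((Z₁,…,Zₙ); Y) = Σ_i I(Zᵢ; Y)`. -/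
theorem mutInfo_joint_eq_sum {Ω β : Type*} {n : ℕ} {α : Fin n → Type*}
    [MeasurableSpace Ω] (μ : Measure Ω) [IsProbabilityMeasure μ]
    [∀ i, Fintype (α i)] [∀ i, MeasurableSpace (α i)]
    [∀ i, MeasurableSingletonClass (α i)]
    [Fintype β] [MeasurableSpace β] [MeasurableSingletonClass β]
    (Z : ∀ i, Ω → α i) (Y : Ω → β)
    (hZ : ∀ i, Measurable (Z i)) (hY : Measurable Y)
    (hindep : ∀ z : ∀ i, α i,
      μ (⋂ i, (Z i) ⁻¹' {z i}) = ∏ i, μ ((Z i) ⁻¹' {z i}))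
    (hcondindep : ∀ y : β, μ (Y ⁻¹' {y}) ≠ 0 → ∀ z : ∀ i, α i,
      μ[|Y ⁻¹' {y}] (⋂ i, (Z i) ⁻¹' {z i}) =
        ∏ i, μ[|Y ⁻¹' {y}] ((Z i) ⁻¹' {z i})) :
    mutInfo μ (fun ω i => Z i ω) Y = ∑ i, mutInfo μ (Z i) Y := by
  classical
  set W : Ω → ∀ i, α i := fun ω i => Z i ω with hWdef
  have hWpre : ∀ z : ∀ i, α i, W ⁻¹' {z} = ⋂ i, (Z i) ⁻¹' {z i} := by
    intro z
    ext ω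
    simp [hWdef, funext_iff, Set.mem_iInter]
  have hWmeas : ∀ z : ∀ i, α i, MeasurableSet (W ⁻¹' {z}) := by
    intro z
    rw [hWpre]
    exact MeasurableSet.iInter fun i => hZ i (measurableSet_singleton _)
  have hYmeas : ∀ y : β, MeasurableSet (Y ⁻¹' {y}) :=
    fun y => hY (measurableSet_singleton _)
  -- abbreviations for the real-valued probabilities
  set q : (∀ i, α i) → β → ℝ := fun z y => (μ (W ⁻¹' {z} ∩ Y ⁻¹' {y})).toReal with hq
  set p : ∀ i, α i → β → ℝ :=
    fun i a y => (μ ((Z i) ⁻¹' {a} ∩ Y ⁻¹' {y})).toReal with hp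
  set qz : (∀ i, α i) → ℝ := fun z => (μ (W ⁻¹' {z})).toReal with hqz
  set pz : ∀ i, α i → ℝ := fun i a => (μ ((Z i) ⁻¹' {a})).toReal with hpz
  set py : β → ℝ := fun y => (μ (Y ⁻¹' {y})).toReal with hpy
  -- marginalization
  have hmarg : ∀ (i : Fin n) (a : α i) (y : β),
      p i a y = ∑ z ∈ Finset.univ.filter (fun z : ∀ j, α j => z i = a), q z y := by
    intro i a y
    have hset : (Z i) ⁻¹' {a} ∩ Y ⁻¹' {y}
        = ⋃ z ∈ Finset.univ.filter (fun z : ∀ j, α j => z i = a),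
            (W ⁻¹' {z} ∩ Y ⁻¹' {y}) := by
      ext ω
      simp only [Set.mem_inter_iff, Set.mem_preimage, Set.mem_singleton_iff,
        Set.mem_iUnion, Finset.mem_filter, Finset.mem_univ, true_and, hWdef,
        funext_iff, exists_prop]
      constructor
      · rintro ⟨ha, hy⟩
        exact ⟨fun j => Z j ω, ha, ⟨fun j => rfl, hy⟩⟩
      · rintro ⟨z, hzi, hz, hy⟩
        exact ⟨(hz i).trans hzi, hy⟩
    have hdisj : Set.PairwiseDisjoint
        ((Finset.univ.filter (fun z : ∀ j, α j => z i = a) :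
            Finset (∀ j, α j)) : Set (∀ j, α j))
        (fun z => W ⁻¹' {z} ∩ Y ⁻¹' {y}) := by
      intro z _ z' _ hzz'
      refine Disjoint.mono Set.inter_subset_left Set.inter_subset_left ?_
      exact (Set.disjoint_singleton.mpr hzz').preimage W
    show (μ ((Z i) ⁻¹' {a} ∩ Y ⁻¹' {y})).toReal = _
    rw [hset, measure_biUnion_finset hdisj
      (fun z _ => (hWmeas z).inter (hYmeas y)),
      ENNReal.toReal_sum (fun z _ => measure_ne_top μ _)]
  -- rewrite the goal in terms of the abbreviations
  show (∑ z : ∀ i, α i, ∑ y : β, q z y * Real.log (q z y / (qz z * py y)))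
      = ∑ i, ∑ a : α i, ∑ y : β, p i a y * Real.log (p i a y / (pz i a * py y))
  -- the key per-`y` identity
  have key : ∀ y : β,
      (∑ z : ∀ i, α i, q z y * Real.log (q z y / (qz z * py y)))
        = ∑ i, ∑ a : α i, p i a y * Real.log (p i a y / (pz i a * py y)) := by
    intro y
    by_cases hy : μ (Y ⁻¹' {y}) = 0
    · have hq0 : ∀ z, q z y = 0 := by
        intro z
        have h0 : μ (W ⁻¹' {z} ∩ Y ⁻¹' {y}) = 0 :=
          measure_inter_null_of_null_right _ hy
        simp [hq, h0]
      have hp0 : ∀ i a, p i a y = 0 := by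
        intro i a
        have h0 : μ ((Z i) ⁻¹' {a} ∩ Y ⁻¹' {y}) = 0 :=
          measure_inter_null_of_null_right _ hy
        simp [hp, h0]
      simp [hq0, hp0]
    · have hpy_pos : 0 < py y := ENNReal.toReal_pos hy (measure_ne_top μ _)
      have hstep : ∀ z : ∀ i, α i,
          q z y * Real.log (q z y / (qz z * py y))
            = ∑ i, q z y * Real.log (p i (z i) y / (pz i (z i) * py y)) := by
        intro z
        by_cases hqzy : q z y = 0
        · simp [hqzy]
        have hq_pos : 0 < q z y := lt_of_le_of_ne ENNReal.toReal_nonneg (Ne.symm hqzy)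
        have hple : ∀ i, q z y ≤ p i (z i) y := by
          intro i
          refine ENNReal.toReal_mono (measure_ne_top μ _) (measure_mono ?_)
          rw [hWpre]
          exact Set.inter_subset_inter_left _ (Set.iInter_subset _ i)
        have hp_pos : ∀ i, 0 < p i (z i) y := fun i => lt_of_lt_of_le hq_pos (hple i)
        have hpz_pos : ∀ i, 0 < pz i (z i) := by
          intro i
          exact lt_of_lt_of_le (hp_pos i)
            (ENNReal.toReal_mono (measure_ne_top μ _)
              (measure_mono Set.inter_subset_left))
        have hqz_prod : qz z = ∏ i, pz i (z i) := by
          show (μ (W ⁻¹' {z})).toReal = _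
          rw [hWpre, hindep z, ENNReal.toReal_prod]
        have hcond : q z y / py y = ∏ i, p i (z i) y / py y := by
          have h := hcondindep y hy z
          rw [← hWpre] at h
          rw [cond_apply (hYmeas y) μ] at h
          simp only [cond_apply (hYmeas y) μ] at h
          have h2 := congrArg ENNReal.toReal h
          rw [ENNReal.toReal_mul, ENNReal.toReal_prod, ENNReal.toReal_inv] at h2
          simp only [ENNReal.toReal_mul, ENNReal.toReal_inv] at h2
          calc q z y / py y
              = (μ (Y ⁻¹' {y})).toReal⁻¹ * (μ (Y ⁻¹' {y} ∩ W ⁻¹' {z})).toReal := by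
                rw [hq, hpy]
                simp only [Set.inter_comm (Y ⁻¹' {y}) (W ⁻¹' {z})]
                rw [inv_mul_eq_div]
            _ = ∏ i, (μ (Y ⁻¹' {y})).toReal⁻¹ *
                  (μ (Y ⁻¹' {y} ∩ (Z i) ⁻¹' {z i})).toReal := h2
            _ = ∏ i, p i (z i) y / py y := by
                refine Finset.prod_congr rfl fun i _ => ?_
                rw [hp, hpy]
                simp only [Set.inter_comm (Y ⁻¹' {y}) ((Z i) ⁻¹' {z i})]
                rw [inv_mul_eq_div]
        have hq_eq : q z y = py y * ∏ i, p i (z i) y / py y := by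
          rw [← hcond]
          field_simp
        have hratio : q z y / (qz z * py y)
            = ∏ i, p i (z i) y / (pz i (z i) * py y) := by
          have hpy_ne : py y ≠ 0 := ne_of_gt hpy_pos
          have hpz_ne : ∀ i, pz i (z i) ≠ 0 := fun i => ne_of_gt (hpz_pos i)
          have hprod_ne : (∏ i, pz i (z i)) ≠ 0 :=
            Finset.prod_ne_zero_iff.mpr fun i _ => hpz_ne i
          rw [hq_eq, hqz_prod, Finset.prod_div_distrib, Finset.prod_const,
            Finset.prod_div_distrib, Finset.prod_mul_distrib, Finset.prod_const]
          field_simp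
        rw [hratio, Real.log_prod (fun i _ => by
            have h1 := hp_pos i; have h2 := hpz_pos i; positivity),
          Finset.mul_sum]
      calc (∑ z : ∀ i, α i, q z y * Real.log (q z y / (qz z * py y)))
          = ∑ z : ∀ i, α i, ∑ i,
              q z y * Real.log (p i (z i) y / (pz i (z i) * py y)) :=
            Finset.sum_congr rfl fun z _ => hstep z
        _ = ∑ i, ∑ z : ∀ i, α i,
              q z y * Real.log (p i (z i) y / (pz i (z i) * py y)) :=
            Finset.sum_comm
        _ = ∑ i, ∑ a : α i, p i a y * Real.log (p i a y / (pz i a * py y)) := by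
            refine Finset.sum_congr rfl fun i _ => ?_
            have hfib := Finset.sum_fiberwise_eq_sum_filter Finset.univ Finset.univ
              (fun z : ∀ j, α j => z i)
              (fun z => q z y * Real.log (p i (z i) y / (pz i (z i) * py y)))
            simp only [Finset.mem_univ, Finset.filter_true] at hfib
            rw [← hfib]
            refine Finset.sum_congr rfl fun a _ => ?_
            calc (∑ z ∈ Finset.univ.filter (fun z : ∀ j, α j => z i = a),
                    q z y * Real.log (p i (z i) y / (pz i (z i) * py y)))
                = ∑ z ∈ Finset.univ.filter (fun z : ∀ j, α j => z i = a),
                    q z y * Real.log (p i a y / (pz i a * py y)) := by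
                  refine Finset.sum_congr rfl fun z hz => ?_
                  rw [(Finset.mem_filter.mp hz).2]
              _ = (∑ z ∈ Finset.univ.filter (fun z : ∀ j, α j => z i = a), q z y)
                    * Real.log (p i a y / (pz i a * py y)) :=
                  (Finset.sum_mul _ _ _).symm
              _ = p i a y * Real.log (p i a y / (pz i a * py y)) := by
                  rw [← hmarg i a y]
  calc (∑ z : ∀ i, α i, ∑ y : β, q z y * Real.log (q z y / (qz z * py y)))
      = ∑ y : β, ∑ z : ∀ i, α i, q z y * Real.log (q z y / (qz z * py y)) :=
        Finset.sum_comm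
    _ = ∑ y : β, ∑ i, ∑ a : α i,
          p i a y * Real.log (p i a y / (pz i a * py y)) :=
        Finset.sum_congr rfl fun y _ => key y
    _ = ∑ i, ∑ y : β, ∑ a : α i,
          p i a y * Real.log (p i a y / (pz i a * py y)) := Finset.sum_comm
    _ = ∑ i, ∑ a : α i, ∑ y : β,
          p i a y * Real.log (p i a y / (pz i a * py y)) :=
        Finset.sum_congr rfl fun i _ => Finset.sum_comm
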